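/- Let k be a field, n ≥ 1, L ⊆ ℤⁿ a subgroup, C a nonempty finite family of subsets of {1,…,n} (the ray sets of the maximal cones), and P ⊆ ℝⁿ a finite set (the vertices of the deformed hyperplane arrangement). Assume: (i) for every p ∈ P and all σ₁, σ₂ ∈ C there exists u₁ ∈ L with (u₁)_i = ⌊p⌋_i for all i ∈ σ₁ ∩ σ₂; (ii) for all σ₁, σ₂ ∈ C there exists u₂ ∈ L with (u₂)_i = 0 for i ∈ σ₁ ∩ σ₂, (u₂)_i > 0 for i ∈ σ₁ ∖ σ₂, and (u₂)_i < 0 for i ∈ σ₂ ∖ σ₁. Let N ⊆ T be the S-submodule generated by M_{Λ(L)} together with the monomials m_p for p ∈ P, and let I ⊆ S be the ideal generated by the monomials x^σ̂₁ y^σ̂₂ for σ₁, σ₂ ∈ C. Then the quotient N / M_{Λ(L)} is I-torsion: there exists an integer k₀ ≥ 1 such that I^{k₀} · N ⊆ M_{Λ(L)}. -/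

import Mathlib

/-!
STATEMENT 2 (Proposition 8 of the paper): the cokernel of `M_{Λ(L)} ↪ N` is torsion with
respect to the irrelevant ideal `I = ⟨x^σ̂₁ y^σ̂₂ : σ₁, σ₂ ∈ C⟩`, where `N` is the
`S`-submodule of `T` generated by `M_{Λ(L)}` together with the vertex monomial labels
`m_p`, `p ∈ P`.
-/

noncomputable section

open MvPolynomial

/-- The Laurent polynomial ring `T` in `x₁,…,xₙ,y₁,…,yₙ` over `k`. -/
abbrev LaurentT (k : Type*) [Field k] (n : ℕ) :=
  AddMonoidAlgebra k ((Fin n → ℤ) × (Fin n → ℤ))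

/-- The polynomial ring `S = k[x₁,…,xₙ,y₁,…,yₙ]`; `Sum.inl i ↦ xᵢ`, `Sum.inr i ↦ yᵢ`. -/
abbrev PolyS (k : Type*) [Field k] (n : ℕ) := MvPolynomial (Fin n ⊕ Fin n) k

/-- The natural inclusion `S → T`; the `S`-module structure on `T` is multiplication
through this map. -/
def incl (k : Type*) [Field k] (n : ℕ) : PolyS k n →+* LaurentT k n :=
  MvPolynomial.eval₂Hom (algebraMap k (LaurentT k n))
    (Sum.elim
      (fun i => AddMonoidAlgebra.single (Pi.single i 1, 0) (1 : k))
      (fun i => AddMonoidAlgebra.single (0, Pi.single i 1) (1 : k)))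

/-- The lattice module `M_{Λ(L)} ⊆ T`: the `k`-span of monomials `x^a y^b` with
`(a,b) ∈ ℕ^{2n} + Λ(L)`. -/
def latticeModule (k : Type*) [Field k] (n : ℕ) (L : AddSubgroup (Fin n → ℤ)) :
    Submodule k (LaurentT k n) :=
  Submodule.span k
    { t | ∃ (c d : Fin n → ℕ) (u : Fin n → ℤ), u ∈ L ∧
        t = AddMonoidAlgebra.single
          ((fun i => (c i : ℤ)) + u, (fun i => (d i : ℤ)) - u) (1 : k) }

/-- The monomial label `m_p = x^{⌊p⌋} y^{-⌊p⌋} ∈ T` of a point `p ∈ ℝⁿ`. -/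
def monLabel (k : Type*) [Field k] (n : ℕ) (p : Fin n → ℝ) : LaurentT k n :=
  AddMonoidAlgebra.single ((fun i => ⌊p i⌋), fun i => -⌊p i⌋) (1 : k)

/-- `x^σ̂ = ∏_{i ∉ σ} xᵢ ∈ S`. -/
def xhat (k : Type*) [Field k] (n : ℕ) (σ : Finset (Fin n)) : PolyS k n :=
  ∏ i ∈ σᶜ, X (Sum.inl i)

/-- `y^σ̂ = ∏_{i ∉ σ} yᵢ ∈ S`. -/
def yhat (k : Type*) [Field k] (n : ℕ) (σ : Finset (Fin n)) : PolyS k n :=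
  ∏ i ∈ σᶜ, X (Sum.inr i)

/-- The `S`-submodule `N ⊆ T` generated by `M_{Λ(L)}` together with the monomials
`m_p`, `p ∈ P`: the `k`-span of all `S`-multiples of elements of `M_{Λ(L)} ∪ {m_p : p ∈ P}`. -/
def bigN (k : Type*) [Field k] (n : ℕ) (L : AddSubgroup (Fin n → ℤ))
    (P : Finset (Fin n → ℝ)) : Submodule k (LaurentT k n) :=
  Submodule.span k
    { t | ∃ (s : PolyS k n) (t₀ : LaurentT k n),
        (t₀ ∈ latticeModule k n L ∨ ∃ p ∈ P, t₀ = monLabel k n p) ∧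
        t = incl k n s * t₀ }

/-- The irrelevant ideal `I ⊆ S` generated by the monomials `x^σ̂₁ y^σ̂₂`, `σ₁, σ₂ ∈ C`. -/
def irrIdeal (k : Type*) [Field k] (n : ℕ) (C : Finset (Finset (Fin n))) :
    Ideal (PolyS k n) :=
  Ideal.span { f | ∃ σ₁ ∈ C, ∃ σ₂ ∈ C, f = xhat k n σ₁ * yhat k n σ₂ }

section AuxLemmas

variable {k : Type*} [Field k] {n : ℕ} {L : AddSubgroup (Fin n → ℤ)}

/-- indicator function of a finset, with values in `ℤ` -/
def chi (s : Finset (Fin n)) : Fin n → ℤ := fun i => if i ∈ s then 1 else 0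

lemma chi_nonneg (s : Finset (Fin n)) (i : Fin n) : 0 ≤ chi s i := by
  unfold chi; split <;> norm_num

lemma chi_of_mem {s : Finset (Fin n)} {i : Fin n} (h : i ∈ s) : chi s i = 1 := by
  simp [chi, h]

lemma single_mem_lattice (v : (Fin n → ℤ) × (Fin n → ℤ)) (κ : k) (u : Fin n → ℤ)
    (hu : u ∈ L) (h1 : ∀ i, u i ≤ v.1 i) (h2 : ∀ i, -v.2 i ≤ u i) :
    AddMonoidAlgebra.single v κ ∈ latticeModule k n L := by
  have hv : v = ((fun i => (((v.1 i - u i).toNat : ℕ) : ℤ)) + u,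
      (fun i => (((v.2 i + u i).toNat : ℕ) : ℤ)) - u) := by
    obtain ⟨v1, v2⟩ := v
    simp only [Prod.mk.injEq]
    constructor <;> funext i <;> simp only [Pi.add_apply, Pi.sub_apply]
    · rw [Int.toNat_of_nonneg (by have := h1 i; simp only at this ⊢; omega)]; ring
    · rw [Int.toNat_of_nonneg (by have := h2 i; simp only at this ⊢; omega)]; ring
  have hgen : AddMonoidAlgebra.single v (1 : k) ∈ latticeModule k n L :=
    Submodule.subset_span ⟨_, _, u, hu, by rw [← hv]⟩
  have hs : AddMonoidAlgebra.single v κ = κ • AddMonoidAlgebra.single v (1 : k) := by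
    rw [AddMonoidAlgebra.smul_single', mul_one]
  rw [hs]
  exact Submodule.smul_mem _ _ hgen

lemma inclX_mul_mem (j : Fin n ⊕ Fin n) {t : LaurentT k n}
    (ht : t ∈ latticeModule k n L) :
    incl k n (MvPolynomial.X j) * t ∈ latticeModule k n L := by
  have hXj : ∃ w : (Fin n → ℤ) × (Fin n → ℤ), (∀ i, 0 ≤ w.1 i) ∧ (∀ i, 0 ≤ w.2 i) ∧
      incl k n (MvPolynomial.X j) = AddMonoidAlgebra.single w (1 : k) := by
    rcases j with i | i
    · exact ⟨(Pi.single i 1, 0), fun i' => by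
        simp [Pi.single_apply]; split <;> norm_num, fun i' => le_refl 0, by
        simp [incl]⟩
    · exact ⟨(0, Pi.single i 1), fun i' => le_refl 0, fun i' => by
        simp [Pi.single_apply]; split <;> norm_num, by
        simp [incl]⟩
  obtain ⟨w, hw1, hw2, hXeq⟩ := hXj
  rw [hXeq]
  induction ht using Submodule.span_induction with
  | mem t ht =>
      obtain ⟨c, d, u, hu, rfl⟩ := ht
      rw [AddMonoidAlgebra.single_mul_single, one_mul]
      refine single_mem_lattice _ _ u hu (fun i => ?_) (fun i => ?_)
      · have := hw1 i
        simp only [Prod.fst_add, Pi.add_apply]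
        have : (0:ℤ) ≤ c i := Int.natCast_nonneg _
        have := hw1 i
        omega
      · have := hw2 i
        simp only [Prod.snd_add, Pi.add_apply, Pi.sub_apply]
        have : (0:ℤ) ≤ d i := Int.natCast_nonneg _
        have := hw2 i
        omega
  | zero => rw [mul_zero]; exact Submodule.zero_mem _
  | add x y hx hy hx' hy' => rw [mul_add]; exact Submodule.add_mem _ hx' hy'
  | smul a x hx hx' => rw [mul_smul_comm]; exact Submodule.smul_mem _ _ hx'

lemma incl_mul_mem (s : PolyS k n) :
    ∀ t ∈ latticeModule k n L, incl k n s * t ∈ latticeModule k n L := by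
  induction s using MvPolynomial.induction_on with
  | C a =>
      intro t ht
      rw [show incl k n (MvPolynomial.C a) = algebraMap k _ a from
        MvPolynomial.eval₂Hom_C _ _ _, ← Algebra.smul_def]
      exact Submodule.smul_mem _ _ ht
  | add p q hp hq =>
      intro t ht
      rw [map_add, add_mul]
      exact Submodule.add_mem _ (hp t ht) (hq t ht)
  | mul_X p j hp =>
      intro t ht
      rw [map_mul, mul_assoc]
      exact hp _ (inclX_mul_mem j ht)

lemma incl_xhat (σ : Finset (Fin n)) :
    incl k n (xhat k n σ) =
      AddMonoidAlgebra.single ((chi σᶜ, (0 : Fin n → ℤ))) (1 : k) := by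
  rw [xhat, map_prod]
  have h1 : ∀ i ∈ σᶜ, incl k n (MvPolynomial.X (Sum.inl i)) =
      AddMonoidAlgebra.single (((Pi.single i 1 : Fin n → ℤ), (0 : Fin n → ℤ))) (1 : k) := by
    intro i _; simp [incl]
  rw [Finset.prod_congr rfl h1, AddMonoidAlgebra.prod_single, Finset.prod_const_one]
  congr 1
  rw [← prod_mk_sum]
  congr 1
  · funext j
    rw [Finset.sum_apply]
    simp only [Pi.single_apply, chi]
    rw [Finset.sum_ite_eq σᶜ j (fun _ => (1:ℤ))]
  · simp

lemma incl_yhat (σ : Finset (Fin n)) :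
    incl k n (yhat k n σ) =
      AddMonoidAlgebra.single (((0 : Fin n → ℤ), chi σᶜ)) (1 : k) := by
  rw [yhat, map_prod]
  have h1 : ∀ i ∈ σᶜ, incl k n (MvPolynomial.X (Sum.inr i)) =
      AddMonoidAlgebra.single (((0 : Fin n → ℤ), (Pi.single i 1 : Fin n → ℤ))) (1 : k) := by
    intro i _; simp [incl]
  rw [Finset.prod_congr rfl h1, AddMonoidAlgebra.prod_single, Finset.prod_const_one]
  congr 1
  rw [← prod_mk_sum]
  congr 1
  · simp
  · funext j
    rw [Finset.sum_apply]
    simp only [Pi.single_apply, chi]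
    rw [Finset.sum_ite_eq σᶜ j (fun _ => (1:ℤ))]

end AuxLemmas

open Pointwise

/-- Under hypotheses (i) and (ii), the quotient `N / M_{Λ(L)}` is `I`-torsion: there is
`k₀ ≥ 1` with `I^{k₀} · N ⊆ M_{Λ(L)}`. -/

theorem cokernel_is_torsion (k : Type*) [Field k] (n : ℕ) (hn : 1 ≤ n)
    (L : AddSubgroup (Fin n → ℤ)) (C : Finset (Finset (Fin n))) (hC : C.Nonempty)
    (P : Finset (Fin n → ℝ))
    (hi : ∀ p ∈ P, ∀ σ₁ ∈ C, ∀ σ₂ ∈ C, ∃ u₁ ∈ L, ∀ i ∈ σ₁ ∩ σ₂, u₁ i = ⌊p i⌋)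
    (hii : ∀ σ₁ ∈ C, ∀ σ₂ ∈ C, ∃ u₂ ∈ L, (∀ i ∈ σ₁ ∩ σ₂, u₂ i = 0) ∧
      (∀ i ∈ σ₁ \ σ₂, 0 < u₂ i) ∧ (∀ i ∈ σ₂ \ σ₁, u₂ i < 0)) :
    ∃ k₀ : ℕ, 1 ≤ k₀ ∧
      ∀ f ∈ (irrIdeal k n C) ^ k₀, ∀ t ∈ bigN k n L P,
        incl k n f * t ∈ latticeModule k n L := by
  classical
  -- Step 1: for each triple, a lattice vector `u` with `u ≤ ⌊p⌋` on `τ₁`, `u ≥ ⌊p⌋` on `τ₂`.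
  have key : ∀ p, p ∈ P → ∀ τ₁, τ₁ ∈ C → ∀ τ₂, τ₂ ∈ C → ∃ u : Fin n → ℤ, u ∈ L ∧
      (∀ i ∈ τ₁, u i ≤ ⌊p i⌋) ∧ (∀ i ∈ τ₂, ⌊p i⌋ ≤ u i) := by
    intro p hp τ₁ h1 τ₂ h2
    obtain ⟨u₁, hu₁L, hu₁⟩ := hi p hp τ₁ h1 τ₂ h2
    obtain ⟨u₂, hu₂L, hz, hpos, hneg⟩ := hii τ₂ h2 τ₁ h1
    set m : ℕ := Finset.univ.sup fun i => (u₁ i - ⌊p i⌋).natAbs with hm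
    refine ⟨u₁ + (m : ℤ) • u₂,
      AddSubgroup.add_mem _ hu₁L (AddSubgroup.zsmul_mem _ hu₂L _), ?_, ?_⟩
    · intro i hiτ₁
      have hmi : (u₁ i - ⌊p i⌋).natAbs ≤ m :=
        Finset.le_sup (f := fun i => (u₁ i - ⌊p i⌋).natAbs) (Finset.mem_univ i)
      simp only [Pi.add_apply, Pi.smul_apply, smul_eq_mul]
      by_cases hiτ₂ : i ∈ τ₂
      · have e1 : u₁ i = ⌊p i⌋ := hu₁ i (Finset.mem_inter.mpr ⟨hiτ₁, hiτ₂⟩)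
        have e2 : u₂ i = 0 := hz i (Finset.mem_inter.mpr ⟨hiτ₂, hiτ₁⟩)
        rw [e1, e2]; simp
      · have e2 : u₂ i < 0 := hneg i (Finset.mem_sdiff.mpr ⟨hiτ₁, hiτ₂⟩)
        have h3 : (m : ℤ) * u₂ i ≤ (m : ℤ) * (-1) :=
          mul_le_mul_of_nonneg_left (by omega) (Int.natCast_nonneg m)
        have h4 : u₁ i - ⌊p i⌋ ≤ (m : ℤ) := by omega
        linarith
    · intro i hiτ₂
      have hmi : (u₁ i - ⌊p i⌋).natAbs ≤ m :=
        Finset.le_sup (f := fun i => (u₁ i - ⌊p i⌋).natAbs) (Finset.mem_univ i)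
      simp only [Pi.add_apply, Pi.smul_apply, smul_eq_mul]
      by_cases hiτ₁ : i ∈ τ₁
      · have e1 : u₁ i = ⌊p i⌋ := hu₁ i (Finset.mem_inter.mpr ⟨hiτ₁, hiτ₂⟩)
        have e2 : u₂ i = 0 := hz i (Finset.mem_inter.mpr ⟨hiτ₂, hiτ₁⟩)
        rw [e1, e2]; simp
      · have e2 : 0 < u₂ i := hpos i (Finset.mem_sdiff.mpr ⟨hiτ₂, hiτ₁⟩)
        have h3 : (m : ℤ) * 1 ≤ (m : ℤ) * u₂ i :=
          mul_le_mul_of_nonneg_left (by omega) (Int.natCast_nonneg m)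
        have h4 : ⌊p i⌋ - u₁ i ≤ (m : ℤ) := by omega
        linarith
  choose uu huL hu1 hu2 using key
  -- Step 2: uniform bound K
  set TT := P.attach ×ˢ (C.attach ×ˢ C.attach) with hTT
  set K : ℕ := 1 + TT.sup (fun x =>
    Finset.univ.sup fun i =>
      (uu x.1.1 x.1.2 x.2.1.1 x.2.1.2 x.2.2.1 x.2.2.2 i - ⌊x.1.1 i⌋).natAbs) with hKdef
  have hKbound : ∀ (p) (hp : p ∈ P) (τ₁) (h1 : τ₁ ∈ C) (τ₂) (h2 : τ₂ ∈ C) (i : Fin n),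
      (uu p hp τ₁ h1 τ₂ h2 i - ⌊p i⌋).natAbs ≤ K := by
    intro p hp τ₁ h1 τ₂ h2 i
    have hmem : (⟨⟨p, hp⟩, ⟨τ₁, h1⟩, ⟨τ₂, h2⟩⟩ :
        {x // x ∈ P} × ({x // x ∈ C} × {x // x ∈ C})) ∈ TT := by
      simp [hTT, Finset.mem_product]
    calc (uu p hp τ₁ h1 τ₂ h2 i - ⌊p i⌋).natAbs
        ≤ Finset.univ.sup (fun i => (uu p hp τ₁ h1 τ₂ h2 i - ⌊p i⌋).natAbs) :=
          Finset.le_sup (f := fun i => (uu p hp τ₁ h1 τ₂ h2 i - ⌊p i⌋).natAbs)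
            (Finset.mem_univ i)
      _ ≤ TT.sup (fun x => Finset.univ.sup fun i =>
            (uu x.1.1 x.1.2 x.2.1.1 x.2.1.2 x.2.2.1 x.2.2.2 i - ⌊x.1.1 i⌋).natAbs) :=
          Finset.le_sup (f := fun x => Finset.univ.sup fun i =>
            (uu x.1.1 x.1.2 x.2.1.1 x.2.1.2 x.2.2.1 x.2.2.2 i - ⌊x.1.1 i⌋).natAbs) hmem
      _ ≤ K := by omega
  clear_value K
  have hK1 : 1 ≤ K := by omega
  clear hKdef
  set G : Set (PolyS k n) :=
    { f | ∃ σ₁ ∈ C, ∃ σ₂ ∈ C, f = xhat k n σ₁ * yhat k n σ₂ } with hG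
  set k₀ : ℕ := C.card * C.card * K + 1 with hk₀
  refine ⟨k₀, by omega, ?_⟩
  -- Step 3: the heart: a product of k₀ generators times a vertex label lies in M
  have heart : ∀ p ∈ P, ∀ f ∈ G ^ k₀,
      incl k n f * monLabel k n p ∈ latticeModule k n L := by
    intro p hp f hf
    rw [Set.mem_pow] at hf
    obtain ⟨F, hF⟩ := hf
    have hFprop : ∀ j, ∃ σ₁ ∈ C, ∃ σ₂ ∈ C, (F j : PolyS k n) = xhat k n σ₁ * yhat k n σ₂ :=
      fun j => (F j).2
    choose σ₁ hσ₁ σ₂ hσ₂ hFeq using hFprop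
    have hfprod : f = ∏ j, (xhat k n (σ₁ j) * yhat k n (σ₂ j)) := by
      rw [← hF, List.prod_ofFn]
      exact Finset.prod_congr rfl fun j _ => hFeq j
    have hterm : ∀ j : Fin k₀, incl k n (xhat k n (σ₁ j) * yhat k n (σ₂ j)) =
        AddMonoidAlgebra.single ((chi (σ₁ j)ᶜ, chi (σ₂ j)ᶜ)) (1 : k) := by
      intro j
      rw [map_mul, incl_xhat, incl_yhat, AddMonoidAlgebra.single_mul_single, one_mul]
      congr 1
      simp [Prod.ext_iff]
    have hinclf : incl k n f = AddMonoidAlgebra.single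
        ((∑ j, chi (σ₁ j)ᶜ, ∑ j, chi (σ₂ j)ᶜ) : (Fin n → ℤ) × (Fin n → ℤ)) (1 : k) := by
      rw [hfprod, map_prod, Finset.prod_congr rfl (fun j _ => hterm j),
        AddMonoidAlgebra.prod_single, Finset.prod_const_one]
      congr 1
      exact (prod_mk_sum _ _ _).symm
    -- pigeonhole
    obtain ⟨y, hyC, hyfib⟩ := Finset.exists_lt_card_fiber_of_mul_lt_card_of_maps_to
      (s := (Finset.univ : Finset (Fin k₀))) (t := C ×ˢ C)
      (f := fun j => (σ₁ j, σ₂ j)) (n := K - 1)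
      (fun j _ => Finset.mem_product.mpr ⟨hσ₁ j, hσ₂ j⟩)
      (by
        have h5 : C.card * C.card * (K - 1) ≤ C.card * C.card * K :=
          Nat.mul_le_mul_left _ (Nat.sub_le _ _)
        simp only [Finset.card_product, Finset.card_univ, Fintype.card_fin]
        omega)
    obtain ⟨τ₁, τ₂⟩ := y
    obtain ⟨hτ₁, hτ₂⟩ := Finset.mem_product.mp hyC
    set Fib := Finset.univ.filter (fun j : Fin k₀ => (σ₁ j, σ₂ j) = (τ₁, τ₂)) with hFib
    have hfib : K ≤ Fib.card := by
      have := hyfib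
      omega
    have hAnn : ∀ (σ : Fin k₀ → Finset (Fin n)) (i : Fin n),
        (0 : ℤ) ≤ ∑ j, chi (σ j)ᶜ i :=
      fun σ i => Finset.sum_nonneg fun j _ => chi_nonneg _ i
    have hlow : ∀ (σ : Fin k₀ → Finset (Fin n)) (τ : Finset (Fin n)),
        (∀ j ∈ Fib, σ j = τ) → ∀ i : Fin n, i ∉ τ → (K : ℤ) ≤ ∑ j, chi (σ j)ᶜ i := by
      intro σ τ hστ i hiτ
      have hone : ∀ j ∈ Fib, chi (σ j)ᶜ i = 1 := fun j hj => by
        rw [hστ j hj]; exact chi_of_mem (Finset.mem_compl.mpr hiτ)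
      calc (K : ℤ) ≤ (Fib.card : ℤ) := by exact_mod_cast hfib
        _ = ∑ j ∈ Fib, chi (σ j)ᶜ i := by
            rw [Finset.sum_congr rfl hone, Finset.sum_const, nsmul_eq_mul, mul_one]
        _ ≤ ∑ j, chi (σ j)ᶜ i :=
            Finset.sum_le_sum_of_subset_of_nonneg (Finset.filter_subset _ _)
              (fun j _ _ => chi_nonneg _ i)
    have hfib1 : ∀ j ∈ Fib, σ₁ j = τ₁ := fun j hj => by
      simp only [hFib, Finset.mem_filter, Prod.mk.injEq] at hj; exact hj.2.1
    have hfib2 : ∀ j ∈ Fib, σ₂ j = τ₂ := fun j hj => by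
      simp only [hFib, Finset.mem_filter, Prod.mk.injEq] at hj; exact hj.2.2
    rw [hinclf, monLabel, AddMonoidAlgebra.single_mul_single, one_mul]
    refine single_mem_lattice _ _ (uu p hp τ₁ hτ₁ τ₂ hτ₂) (huL p hp τ₁ hτ₁ τ₂ hτ₂)
      (fun i => ?_) (fun i => ?_)
    · simp only [Prod.fst_add, Pi.add_apply, Finset.sum_apply]
      by_cases hiτ : i ∈ τ₁
      · have h6 := hu1 p hp τ₁ hτ₁ τ₂ hτ₂ i hiτ
        have h7 := hAnn σ₁ i
        omega
      · have h6 := hlow σ₁ τ₁ hfib1 i hiτ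
        have h7 := hKbound p hp τ₁ hτ₁ τ₂ hτ₂ i
        omega
    · simp only [Prod.snd_add, Pi.add_apply, Finset.sum_apply]
      by_cases hiτ : i ∈ τ₂
      · have h6 := hu2 p hp τ₁ hτ₁ τ₂ hτ₂ i hiτ
        have h7 := hAnn σ₂ i
        omega
      · have h6 := hlow σ₂ τ₂ hfib2 i hiτ
        have h7 := hKbound p hp τ₁ hτ₁ τ₂ hτ₂ i
        omega
  -- Step 4: assemble
  intro f hf t ht
  induction ht using Submodule.span_induction with
  | mem t htmem =>
      obtain ⟨s, t₀, ht₀, rfl⟩ := htmem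
      rw [← mul_assoc, mul_comm (incl k n f) (incl k n s), mul_assoc]
      refine incl_mul_mem s _ ?_
      rcases ht₀ with ht₀ | ⟨p, hp, rfl⟩
      · exact incl_mul_mem f _ ht₀
      · have hpow : (irrIdeal k n C) ^ k₀ = Ideal.span (G ^ k₀) := by
          rw [irrIdeal, Ideal.span, Ideal.span, Submodule.span_pow]
        rw [hpow] at hf
        induction hf using Submodule.span_induction with
        | mem g hg => exact heart p hp g hg
        | zero => rw [map_zero, zero_mul]; exact Submodule.zero_mem _
        | add a b ha hb ha' hb' =>
            rw [map_add, add_mul]; exact Submodule.add_mem _ ha' hb'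
        | smul a x hx hx' =>
            rw [smul_eq_mul, map_mul, mul_assoc]
            exact incl_mul_mem a _ hx'
  | zero => rw [mul_zero]; exact Submodule.zero_mem _
  | add x y hx hy hx' hy' => rw [mul_add]; exact Submodule.add_mem _ hx' hy'
  | smul a x hx hx' => rw [mul_smul_comm]; exact Submodule.smul_mem _ _ hx'

end
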